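/- arXiv:2305.09912 — 5 statements merged into one kernel-verified Lean document; each statement's English description precedes it below -/
import Mathlib

section
/- Let V be an ℝ-linear subspace of ℝⁿ and V^⊥ its orthogonal complement. Set L₀ := {(v, w) : v ∈ V, w ∈ V^⊥} ⊆ ℝⁿ ⊕ ℝⁿ (this is V ⊕ √−1·V^⊥ under the identification (x,y) ↦ x + √−1 y with ℂⁿ). If L is a Lagrangian subspace of ℝⁿ ⊕ ℝⁿ with L ∩ L₀ = V × {0}, then there exists a symmetric linear operator S : V^⊥ → V^⊥ (i.e. ⟪S w, w'⟫ = ⟪w, S w'⟫ for all w, w' ∈ V^⊥) such that L = {(v + w, S w) : v ∈ V, w ∈ V^⊥}. -/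
/-!
Isotropy of `L` against `V × 0 ⊆ L` forces the second component of every element of `L` into
`Vᗮ`; so if `(0, y) ∈ L` then `(0, y) ∈ L ⊓ (V × Vᗮ) = V × 0` and `y = 0`. Thus `L` projects
injectively, and by dimension count bijectively, onto the first factor: `L` is the graph of a
linear `f`, which vanishes on `V` and takes values in `Vᗮ`. Isotropy of a graph is symmetry
of `f`, and `S` is `f` restricted to `Vᗮ`.
-/

open Module Submodule

theorem Submodule.exists_eq_graph_of_finrank_eq {K E F : Type*} [DivisionRing K]
    [AddCommGroup E] [Module K E] [FiniteDimensional K E] [AddCommGroup F] [Module K F]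
    {L : Submodule K (E × F)} (hdim : finrank K L = finrank K E)
    (hvert : ∀ y, ((0 : E), y) ∈ L → y = 0) :
    ∃ f : E →ₗ[K] F, L = f.graph := by
  have hinj : Function.Injective (LinearMap.fst K E F ∘ₗ L.subtype) := by
    rw [← LinearMap.ker_eq_bot, LinearMap.ker_eq_bot']
    rintro ⟨⟨x, y⟩, hz⟩ (rfl : x = 0)
    simp [hvert y hz]
  have : FiniteDimensional K L := .of_injective _ hinj
  exact L.exists_eq_graph (LinearMap.linearEquivOfInjective _ hinj hdim).bijective

section Symplectic

variable {E : Type*} [NormedAddCommGroup E] [InnerProductSpace ℝ E]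

def IsIsotropic (L : Submodule ℝ (E × E)) : Prop :=
  ∀ z ∈ L, ∀ z' ∈ L, inner ℝ z.1 z'.2 - inner ℝ z.2 z'.1 = 0

variable {V : Submodule ℝ E} {L : Submodule ℝ (E × E)}

theorem IsIsotropic.snd_mem_orthogonal (hL : IsIsotropic L) (hV : V.prod ⊥ ≤ L) {z : E × E}
    (hz : z ∈ L) : z.2 ∈ Vᗮ := by
  refine (mem_orthogonal _ _).2 fun v hv ↦ ?_
  simpa using hL (v, 0) (hV (mem_prod.2 ⟨hv, zero_mem _⟩)) z hz

theorem IsIsotropic.isSymmetric_of_graph {f : E →ₗ[ℝ] E} (hf : IsIsotropic f.graph) :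
    f.IsSymmetric := by
  intro x y
  have := hf (x, f x) (by simp) (y, f y) (by simp)
  rw [sub_eq_zero] at this
  exact this.symm

theorem IsIsotropic.exists_eq_graph [FiniteDimensional ℝ E] (hL : IsIsotropic L)
    (hdim : finrank ℝ L = finrank ℝ E) (hint : L ⊓ V.prod Vᗮ = V.prod ⊥) :
    ∃ f : E →ₗ[ℝ] E, L = f.graph := by
  have hV : V.prod ⊥ ≤ L := hint ▸ inf_le_left
  refine exists_eq_graph_of_finrank_eq hdim fun y hy ↦ ?_
  have : ((0 : E), y) ∈ L ⊓ V.prod Vᗮ :=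
    ⟨hy, mem_prod.2 ⟨zero_mem _, hL.snd_mem_orthogonal hV hy⟩⟩
  rw [hint] at this
  simpa using (mem_prod.1 this).2

theorem LinearMap.mem_graph_iff_exists_add_orthogonal [V.HasOrthogonalProjection]
    {f : E →ₗ[ℝ] E} (hf : ∀ v ∈ V, f v = 0) (z : E × E) :
    z ∈ f.graph ↔ ∃ (v : V) (w : Vᗮ), z = ((v : E) + w, f w) := by
  constructor
  · rintro (hz : z.2 = f z.1)
    obtain ⟨v, hv, w, hw, hvw⟩ := V.exists_add_mem_mem_orthogonal z.1
    refine ⟨⟨v, hv⟩, ⟨w, hw⟩, Prod.ext hvw ?_⟩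
    simp [hz, hvw, hf v hv]
  · rintro ⟨v, w, rfl⟩
    simp [hf v v.2]

end Symplectic

/-- Lemma 2.2 of the paper.
ℝⁿ ⊕ ℝⁿ carries the standard symplectic form
ω₀((x,y),(x',y')) = ⟪x,y'⟫ − ⟪y,x'⟫.  If `L` is a Lagrangian subspace
(i.e. `finrank L = n` and ω₀ vanishes on `L`) with `L ∩ (V × Vᗮ) = V × {0}`,
then `L = {(v + w, S w) : v ∈ V, w ∈ Vᗮ}` for some symmetric operator
`S : Vᗮ → Vᗮ`. -/
theorem conormal_clean_intersection_graph
    (n : ℕ) (V : Submodule ℝ (EuclideanSpace ℝ (Fin n)))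
    (L : Submodule ℝ (EuclideanSpace ℝ (Fin n) × EuclideanSpace ℝ (Fin n)))
    (hdim : Module.finrank ℝ L = n)
    (hiso : ∀ z ∈ L, ∀ z' ∈ L,
      (inner ℝ z.1 z'.2 : ℝ) - (inner ℝ z.2 z'.1 : ℝ) = 0)
    (hint : L ⊓ V.prod Vᗮ = V.prod ⊥) :
    ∃ S : Vᗮ →ₗ[ℝ] Vᗮ,
      (∀ w w' : Vᗮ,
        (inner ℝ ((S w : Vᗮ) : EuclideanSpace ℝ (Fin n)) ((w' : Vᗮ) : EuclideanSpace ℝ (Fin n)) : ℝ)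
          = (inner ℝ ((w : Vᗮ) : EuclideanSpace ℝ (Fin n)) ((S w' : Vᗮ) : EuclideanSpace ℝ (Fin n)) : ℝ)) ∧
      (∀ z : EuclideanSpace ℝ (Fin n) × EuclideanSpace ℝ (Fin n),
        z ∈ L ↔ ∃ (v : V) (w : Vᗮ),
          z = ((v : EuclideanSpace ℝ (Fin n)) + (w : EuclideanSpace ℝ (Fin n)),
               ((S w : Vᗮ) : EuclideanSpace ℝ (Fin n)))) := by
  have hL : IsIsotropic L := hiso
  have hV : V.prod ⊥ ≤ L := hint ▸ inf_le_left
  obtain ⟨f, rfl⟩ := hL.exists_eq_graph (by simpa using hdim) hint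
  have hfV (v) (hv : v ∈ V) : f v = 0 :=
    ((f.mem_graph_iff (v, 0)).1 (hV (mem_prod.2 ⟨hv, zero_mem _⟩))).symm
  have hfV_orth (x) : f x ∈ Vᗮ := hL.snd_mem_orthogonal hV ((f.mem_graph_iff (x, f x)).2 rfl)
  refine ⟨f.restrict fun x _ ↦ hfV_orth x, fun w w' ↦ hL.isSymmetric_of_graph w w', ?_⟩
  exact f.mem_graph_iff_exists_add_orthogonal hfV
end

section
/- Let V be an ℝ-linear subspace of ℝⁿ and V^⊥ its orthogonal complement, and set L₀ := {(v, w) : v ∈ V, w ∈ V^⊥} ⊆ ℝⁿ ⊕ ℝⁿ. If L is a Lagrangian subspace of ℝⁿ ⊕ ℝⁿ with L ∩ L₀ = V × {0}, then the projection ℝⁿ ⊕ ℝⁿ → ℝⁿ, (x, y) ↦ x, restricts to a linear isomorphism from L onto ℝⁿ. -/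
open scoped RealInnerProductSpace

section

variable {E : Type*} [NormedAddCommGroup E] [InnerProductSpace ℝ E]
  {L : Submodule ℝ (E × E)} {V : Submodule ℝ E}

/-- Pairing `(0, y)` against `(v, 0)` under the symplectic form gives `-⟪y, v⟫`. -/
theorem snd_mem_orthogonal_of_isotropic
    (hiso : ∀ z ∈ L, ∀ z' ∈ L, ⟪z.1, z'.2⟫ - ⟪z.2, z'.1⟫ = 0)
    (hVL : V.prod ⊥ ≤ L) {y : E} (hy : ((0 : E), y) ∈ L) : y ∈ Vᗮ := by
  rw [Submodule.mem_orthogonal']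
  intro v hv
  have hpair := hiso _ hy (v, 0) (hVL ⟨hv, rfl⟩)
  simpa using hpair

theorem injective_fst_comp_subtype_of_isotropic_of_inf_eq
    (hiso : ∀ z ∈ L, ∀ z' ∈ L, ⟪z.1, z'.2⟫ - ⟪z.2, z'.1⟫ = 0)
    (hint : L ⊓ V.prod Vᗮ = V.prod ⊥) :
    Function.Injective ((LinearMap.fst ℝ E E).comp L.subtype) := by
  rw [← LinearMap.ker_eq_bot, LinearMap.ker_eq_bot']
  rintro ⟨⟨x, y⟩, hz⟩ (hx : x = 0)
  subst hx
  have hyV : y ∈ Vᗮ := snd_mem_orthogonal_of_isotropic hiso (hint ▸ inf_le_left) hz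
  have hmem : ((0 : E), y) ∈ V.prod ⊥ := hint ▸ ⟨hz, V.zero_mem, hyV⟩
  have hy : y = 0 := hmem.2
  subst hy
  rfl

end

/-- the "in particular" part of Lemma 2.2 of the paper.
If `L` is a Lagrangian subspace of ℝⁿ ⊕ ℝⁿ (with the standard symplectic form
ω₀((x,y),(x',y')) = ⟪x,y'⟫ − ⟪y,x'⟫) satisfying `L ∩ (V × Vᗮ) = V × {0}`,
then the projection `(x, y) ↦ x` restricts to a linear isomorphism of `L`
onto ℝⁿ. -/
theorem conormal_clean_intersection_projection_bijective
    (n : ℕ) (V : Submodule ℝ (EuclideanSpace ℝ (Fin n)))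
    (L : Submodule ℝ (EuclideanSpace ℝ (Fin n) × EuclideanSpace ℝ (Fin n)))
    (hdim : Module.finrank ℝ L = n)
    (hiso : ∀ z ∈ L, ∀ z' ∈ L,
      (inner ℝ z.1 z'.2 : ℝ) - (inner ℝ z.2 z'.1 : ℝ) = 0)
    (hint : L ⊓ V.prod Vᗮ = V.prod ⊥) :
    Function.Bijective
      ((LinearMap.fst ℝ (EuclideanSpace ℝ (Fin n)) (EuclideanSpace ℝ (Fin n))).comp
        L.subtype) := by
  have hinj := injective_fst_comp_subtype_of_isotropic_of_inf_eq hiso hint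
  have hfinrank : Module.finrank ℝ L = Module.finrank ℝ (EuclideanSpace ℝ (Fin n)) := by
    simp [hdim]
  exact ⟨hinj, (LinearMap.injective_iff_surjective_of_finrank_eq_finrank hfinrank).mp hinj⟩
end

section
/- Let V be an ℝ-linear subspace of ℝⁿ and V^⊥ its orthogonal complement. Let L be a Lagrangian subspace of ℝⁿ ⊕ ℝⁿ with V × {0} ⊆ L, and let X := {z ∈ L : z is orthogonal to V × {0} with respect to the standard inner product on ℝⁿ ⊕ ℝⁿ}. Then X ⊆ V^⊥ × V^⊥, the symplectic form ω₀ vanishes identically on X, and dim X = n − dim V; that is, X is a Lagrangian subspace of V^⊥ ⊕ V^⊥ (with the restricted symplectic form). -/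
/-!
`X = L ⊓ (Vᗮ × ℝⁿ)`, and `V × {0} ≤ L` is a complement of `Vᗮ × ℝⁿ` in `ℝⁿ × ℝⁿ`, so by the
modular law `L = V × {0} ⊕ X` and `dim X = dim L - dim V`.
-/

namespace Submodule

theorem isCompl_prod {R M M₂ : Type*} [Ring R] [AddCommGroup M] [Module R M]
    [AddCommGroup M₂] [Module R M₂] {p p' : Submodule R M} {q q' : Submodule R M₂}
    (hp : IsCompl p p') (hq : IsCompl q q') : IsCompl (p.prod q) (p'.prod q') where
  disjoint := by rw [disjoint_iff, prod_inf_prod, hp.inf_eq_bot, hq.inf_eq_bot, prod_bot]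
  codisjoint := by rw [codisjoint_iff, prod_sup_prod, hp.sup_eq_top, hq.sup_eq_top, prod_top]

theorem finrank_prod_bot {K M M₂ : Type*} [DivisionRing K] [AddCommGroup M] [Module K M]
    [AddCommGroup M₂] [Module K M₂] (p : Submodule K M) :
    Module.finrank K (p.prod (⊥ : Submodule K M₂)) = Module.finrank K p := by
  rw [← map_inl]
  exact (equivMapOfInjective _ LinearMap.inl_injective p).finrank_eq.symm

theorem finrank_inf_add_finrank_of_isCompl_of_le {K M : Type*} [DivisionRing K]
    [AddCommGroup M] [Module K M] [FiniteDimensional K M] {A B L : Submodule K M}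
    (hAB : IsCompl A B) (hAL : A ≤ L) :
    Module.finrank K ↥(L ⊓ B) + Module.finrank K A = Module.finrank K L := by
  have hsup : A ⊔ L ⊓ B = L := by
    rw [inf_comm, ← sup_inf_assoc_of_le B hAL, hAB.sup_eq_top, top_inf_eq]
  have hinf : A ⊓ (L ⊓ B) = ⊥ := (hAB.disjoint.mono_right inf_le_right).eq_bot
  have := finrank_sup_add_finrank_inf_eq A (L ⊓ B)
  rw [hsup, hinf, finrank_bot] at this
  omega

end Submodule

open Submodule in
/-- intermediate claim in the proof of Lemma 2.2 of the paper.
Let `L` be a Lagrangian subspace of ℝⁿ ⊕ ℝⁿ (standard symplectic form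
ω₀((x,y),(x',y')) = ⟪x,y'⟫ − ⟪y,x'⟫) containing `V × {0}`, and let `X` be the
orthogonal complement of `V × {0}` inside `L` (with respect to the standard
inner product ⟪(x,y),(x',y')⟫ = ⟪x,x'⟫ + ⟪y,y'⟫ on ℝⁿ ⊕ ℝⁿ).  Then
`X ⊆ Vᗮ × Vᗮ`, ω₀ vanishes identically on `X`, and `dim X = n − dim V`;
i.e. `X` is a Lagrangian subspace of `Vᗮ ⊕ Vᗮ`. -/
theorem orthogonal_complement_in_lagrangian
    (n : ℕ) (V : Submodule ℝ (EuclideanSpace ℝ (Fin n)))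
    (L : Submodule ℝ (EuclideanSpace ℝ (Fin n) × EuclideanSpace ℝ (Fin n)))
    (hdim : Module.finrank ℝ L = n)
    (hiso : ∀ z ∈ L, ∀ z' ∈ L,
      (inner ℝ z.1 z'.2 : ℝ) - (inner ℝ z.2 z'.1 : ℝ) = 0)
    (hVL : V.prod (⊥ : Submodule ℝ (EuclideanSpace ℝ (Fin n))) ≤ L)
    (X : Submodule ℝ (EuclideanSpace ℝ (Fin n) × EuclideanSpace ℝ (Fin n)))
    (hX : ∀ z, z ∈ X ↔ z ∈ L ∧ ∀ v ∈ V,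
      (inner ℝ z.1 v : ℝ) + (inner ℝ z.2 (0 : EuclideanSpace ℝ (Fin n)) : ℝ) = 0) :
    (∀ z ∈ X, z.1 ∈ Vᗮ ∧ z.2 ∈ Vᗮ) ∧
    (∀ z ∈ X, ∀ z' ∈ X, (inner ℝ z.1 z'.2 : ℝ) - (inner ℝ z.2 z'.1 : ℝ) = 0) ∧
    Module.finrank ℝ X = n - Module.finrank ℝ V := by
  have hX_eq : X = L ⊓ Vᗮ.prod ⊤ := by
    ext z
    simp [hX, mem_orthogonal']
  refine ⟨fun z hz ↦ ?_, fun z hz z' hz' ↦ ?_, ?_⟩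
  · rw [hX_eq] at hz
    refine ⟨hz.2.1, (mem_orthogonal' _ _).mpr fun v hv ↦ ?_⟩
    -- `z` is `ω₀`-orthogonal to `(v, 0) ∈ L`, and `ω₀(z, (v, 0)) = -⟪z.2, v⟫`
    simpa using hiso z hz.1 (v, 0) (hVL ⟨hv, zero_mem _⟩)
  · exact hiso z ((hX z).mp hz).1 z' ((hX z').mp hz').1
  · have := finrank_inf_add_finrank_of_isCompl_of_le
      (isCompl_prod V.isCompl_orthogonal isCompl_bot_top) hVL
    rw [← hX_eq, finrank_prod_bot, hdim] at this
    omega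
end

section
/- Let w > 0 be a real number and d ≥ 1 an integer. Let f be a continuous map from the closed unit disk D̄ = {z ∈ ℂ : |z| ≤ 1} to ℂ^d which is holomorphic on the open unit disk. Suppose there exist three distinct points p₀, p₁, p₂ on the unit circle dividing it into three arcs A₀, A₁, A₂ such that f(A₀) ⊆ √−1·ℝ^d, f(A₁) ⊆ (1 + 2w√−1)·ℝ^d, and f(A₂) ⊆ (1 + w√−1)·ℝ^d, where for ζ ∈ ℂ we write ζ·ℝ^d := {(ζ x₁, …, ζ x_d) : (x₁, …, x_d) ∈ ℝ^d} ⊆ ℂ^d. Then f is constantly equal to 0. -/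
/-!
Each coordinate `g` of `f` maps the unit circle into a finite union of real lines through `0`:
the three given lines, together with the lines through the values at `p₀, p₁, p₂`. Such a union
`B` is Lebesgue-null and invariant under real dilations. If `g` were not constant, by the open
mapping theorem `g(D)` would be a nonempty open set, so it would contain a point `q ∉ B ∪ {0}`.
The ray `{t q : t ≥ 1}` avoids `B` and leaves the compact set `g(D̄)`, hence meets its frontier,
which lies in `g(∂D) ⊆ B`, a contradiction. So `g` is constant, and the constant lies on both
`√−1·ℝ` and `(1 + 2w√−1)·ℝ`, whose only common point is `0`.
-/

open Metric Set MeasureTheory Complex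

theorem IsPreconnected.inter_frontier_nonempty {X : Type*} [TopologicalSpace X] {s t : Set X}
    (hs : IsPreconnected s) (hst : (s ∩ t).Nonempty) (hs_diff : (s \ t).Nonempty) :
    (s ∩ frontier t).Nonempty := by
  by_contra h
  rw [not_nonempty_iff_eq_empty] at h
  have hcover : s ⊆ interior t ∪ (closure t)ᶜ := fun x hx ↦ by
    by_cases hxt : x ∈ closure t
    · exact Or.inl (not_not.1 fun hxi ↦ h.subset ⟨hx, hxt, hxi⟩)
    · exact Or.inr hxt
  obtain ⟨x, hxs, hxt⟩ := hst
  obtain ⟨y, hys, hyt⟩ := hs_diff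
  obtain ⟨z, -, hzi, hzc⟩ := hs _ _ isOpen_interior isClosed_closure.isOpen_compl hcover
    ⟨x, hxs, (hcover hxs).resolve_right (not_not.2 (subset_closure hxt))⟩
    ⟨y, hys, (hcover hys).resolve_left fun hyi ↦ hyt (interior_subset hyi)⟩
  exact hzc (subset_closure (interior_subset hzi))

theorem exists_one_le_smul_mem_frontier {E : Type*} [NormedAddCommGroup E] [NormedSpace ℝ E]
    {K : Set E} (hK : Bornology.IsBounded K) {q : E} (hqK : q ∈ K) (hq : q ≠ 0) :
    ∃ t : ℝ, 1 ≤ t ∧ t • q ∈ frontier K := by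
  have hray : IsPreconnected ((· • q) '' Ici (1 : ℝ)) :=
    isPreconnected_Ici.image _ (continuous_id.smul continuous_const).continuousOn
  obtain ⟨M, hM⟩ := hK.subset_closedBall 0
  have hq_pos : 0 < ‖q‖ := norm_pos_iff.2 hq
  set t := max 1 ((M + 1) / ‖q‖)
  have hfar : t • q ∉ K := fun ht ↦ by
    have h := mem_closedBall_zero_iff.1 (hM ht)
    rw [norm_smul, Real.norm_of_nonneg (zero_le_one.trans (le_max_left _ _))] at h
    have := (div_le_iff₀ hq_pos).1 (le_max_right 1 ((M + 1) / ‖q‖))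
    linarith
  obtain ⟨_, ⟨s, hs, rfl⟩, hsK⟩ := hray.inter_frontier_nonempty
    ⟨q, ⟨1, mem_Ici.2 le_rfl, one_smul ℝ q⟩, hqK⟩
    ⟨t • q, ⟨t, mem_Ici.2 (le_max_left _ _), rfl⟩, hfar⟩
  exact ⟨s, hs, hsK⟩

theorem frontier_image_closure_subset {X Y : Type*} [TopologicalSpace X] [TopologicalSpace Y]
    {g : X → Y} {U : Set X} (hU : IsOpen U) (hgU : IsOpen (g '' U))
    (hK : IsClosed (g '' closure U)) :
    frontier (g '' closure U) ⊆ g '' frontier U := by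
  rintro _ ⟨hx, hxi⟩
  obtain ⟨z, hz, rfl⟩ := hK.closure_eq ▸ hx
  refine ⟨z, ⟨hz, fun hzU ↦ hxi ?_⟩, rfl⟩
  rw [hU.interior_eq] at hzU
  exact interior_maximal (image_mono subset_closure) hgU (mem_image_of_mem g hzU)

theorem IsPreconnected.exists_eqOn_closure_of_mapsTo_frontier {g : ℂ → ℂ} {U : Set ℂ}
    (hUo : IsOpen U) (hUc : IsPreconnected U) (hUb : Bornology.IsBounded U)
    (hgc : ContinuousOn g (closure U)) (hgd : DifferentiableOn ℂ g U) {B : Set ℂ}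
    (hB0 : volume B = 0) (hB : ∀ t : ℝ, 1 ≤ t → ∀ x, t • x ∈ B → x ∈ B)
    (hgB : MapsTo g (frontier U) B) :
    ∃ c, EqOn g (fun _ ↦ c) (closure U) := by
  rcases U.eq_empty_or_nonempty with rfl | hUne
  · exact ⟨0, by simp⟩
  rcases (hgd.analyticOnNhd hUo).is_constant_or_isOpen hUc with ⟨c, hc⟩ | hopen
  · exact ⟨c, Set.EqOn.of_subset_closure hc hgc continuousOn_const subset_closure subset_rfl⟩
  have hK : IsCompact (g '' closure U) := hUb.isCompact_closure.image_of_continuousOn hgc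
  have hgU : IsOpen (g '' U) := hopen U subset_rfl hUo
  have hnull : volume (B ∪ {0}) = 0 := measure_union_null hB0 (measure_singleton 0)
  obtain ⟨q, hqU, hq⟩ : (g '' U \ (B ∪ {0})).Nonempty := nonempty_of_measure_ne_zero <| by
    rw [measure_sdiff_null hnull]
    exact (hgU.measure_pos volume (hUne.image g)).ne'
  obtain ⟨t, ht, htq⟩ := exists_one_le_smul_mem_frontier hK.isBounded
    (image_mono subset_closure hqU) fun h ↦ hq (Or.inr h)
  obtain ⟨z, hz, hzq⟩ := frontier_image_closure_subset hUo hgU hK.isClosed htq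
  exact absurd (Or.inl (hB t ht q (hzq ▸ hgB hz))) hq

namespace Complex

def realLines (S : Set ℂ) : Set ℂ := ⋃ v ∈ S, (ℝ ∙ v : Submodule ℝ ℂ)

theorem volume_realLines_eq_zero {S : Set ℂ} (hS : S.Countable) : volume (realLines S) = 0 := by
  refine (measure_biUnion_null_iff hS).2 fun v _ ↦ Measure.addHaar_submodule _ _ fun h ↦ ?_
  have := finrank_span_le_card (R := ℝ) ({v} : Set ℂ)
  rw [h, finrank_top, finrank_real_complex] at this
  simp at this

theorem smul_mem_realLines_iff {S : Set ℂ} {t : ℝ} (ht : t ≠ 0) {x : ℂ} :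
    t • x ∈ realLines S ↔ x ∈ realLines S := by
  simp only [realLines, mem_iUnion, SetLike.mem_coe, Submodule.smul_mem_iff _ ht]

theorem self_mem_realLines {S : Set ℂ} {v : ℂ} (hv : v ∈ S) : v ∈ realLines S :=
  mem_biUnion hv (Submodule.mem_span_singleton_self v)

theorem mem_realLines_of_eq_mul_ofReal {S : Set ℂ} {u v : ℂ} (hv : v ∈ S)
    (hu : ∃ x : ℝ, u = v * x) : u ∈ realLines S := by
  obtain ⟨x, rfl⟩ := hu
  refine mem_biUnion hv ?_
  rw [SetLike.mem_coe, mul_comm, ← real_smul]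
  exact Submodule.smul_mem _ x (Submodule.mem_span_singleton_self v)

end Complex

theorem holomorphic_triangle_component_constant_general
    (w : ℝ) (d : ℕ)
    (f : ℂ → Fin d → ℂ)
    (hcont : ContinuousOn f (Metric.closedBall 0 1))
    (hdiff : DifferentiableOn ℂ f (Metric.ball 0 1))
    (p₀ p₁ p₂ : ℂ)
    (A₀ A₁ A₂ : Set ℂ)
    (hconn : IsConnected A₀ ∧ IsConnected A₁ ∧ IsConnected A₂)
    (hunion : A₀ ∪ A₁ ∪ A₂ = Metric.sphere (0 : ℂ) 1 \ {p₀, p₁, p₂})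
    (hf₀ : ∀ z ∈ A₀, ∀ k : Fin d, ∃ x : ℝ, f z k = Complex.I * (x : ℂ))
    (hf₁ : ∀ z ∈ A₁, ∀ k : Fin d, ∃ x : ℝ,
      f z k = (1 + (2 * w : ℝ) * Complex.I) * (x : ℂ))
    (hf₂ : ∀ z ∈ A₂, ∀ k : Fin d, ∃ x : ℝ,
      f z k = (1 + (w : ℝ) * Complex.I) * (x : ℂ)) :
    ∀ z ∈ Metric.closedBall (0 : ℂ) 1, f z = 0 := by
  intro z hz
  funext k
  set S : Set ℂ := {I, 1 + (2 * w : ℝ) * I, 1 + (w : ℝ) * I, f p₀ k, f p₁ k, f p₂ k}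
  have hboundary : MapsTo (f · k) (sphere 0 1) (realLines S) := by
    intro y hy
    by_cases hp : y ∈ ({p₀, p₁, p₂} : Set ℂ)
    · rcases hp with rfl | rfl | rfl <;> exact self_mem_realLines (by simp [S])
    rcases (hunion ▸ ⟨hy, hp⟩ : y ∈ A₀ ∪ A₁ ∪ A₂) with (hy | hy) | hy
    exacts [mem_realLines_of_eq_mul_ofReal (by simp [S]) (hf₀ y hy k),
      mem_realLines_of_eq_mul_ofReal (by simp [S]) (hf₁ y hy k),
      mem_realLines_of_eq_mul_ofReal (by simp [S]) (hf₂ y hy k)]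
  obtain ⟨c, hc⟩ := (convex_ball (0 : ℂ) 1).isPreconnected.exists_eqOn_closure_of_mapsTo_frontier
    isOpen_ball isBounded_ball
    (by simpa [closure_ball _ one_ne_zero] using continuousOn_pi.1 hcont k)
    (differentiableOn_pi.1 hdiff k) (volume_realLines_eq_zero S.toFinite.countable)
    (fun t ht _ ↦ (smul_mem_realLines_iff (zero_lt_one.trans_le ht).ne').1)
    (by rwa [frontier_ball _ one_ne_zero])
  rw [closure_ball _ one_ne_zero] at hc
  have hA : A₀ ∪ A₁ ∪ A₂ ⊆ closedBall 0 1 := hunion ▸ fun y hy ↦ sphere_subset_closedBall hy.1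
  obtain ⟨z₀, hz₀⟩ := hconn.1.nonempty
  obtain ⟨z₁, hz₁⟩ := hconn.2.1.nonempty
  obtain ⟨x, hx⟩ := hf₀ z₀ hz₀ k
  obtain ⟨y, hy⟩ := hf₁ z₁ hz₁ k
  have hx' : c = I * x := (hc (hA (Or.inl (Or.inl hz₀)))).symm.trans hx
  have hy' : c = (1 + (2 * w : ℝ) * I) * y := (hc (hA (Or.inl (Or.inr hz₁)))).symm.trans hy
  have hy0 : y = 0 := by simpa [hx'] using (congrArg re hy').symm
  simp [hc hz, hy', hy0]

/-- from the proof of Proposition 3.1 of the paper.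
A map `f : D̄ → ℂᵈ`, continuous on the closed unit disk and holomorphic on
its interior, whose boundary values on the three arcs `A₀, A₁, A₂` cut out
by three distinct boundary points `p₀, p₁, p₂` lie (coordinatewise) on the
three real lines `√−1·ℝ`, `(1 + 2w√−1)·ℝ` and `(1 + w√−1)·ℝ` respectively
(`w > 0`), is constantly equal to `0`. -/
theorem holomorphic_triangle_component_constant
    (w : ℝ) (hw : 0 < w) (d : ℕ) (hd : 1 ≤ d)
    (f : ℂ → Fin d → ℂ)
    (hcont : ContinuousOn f (Metric.closedBall 0 1))
    (hdiff : DifferentiableOn ℂ f (Metric.ball 0 1))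
    (p₀ p₁ p₂ : ℂ)
    (hp₀ : p₀ ∈ Metric.sphere (0 : ℂ) 1)
    (hp₁ : p₁ ∈ Metric.sphere (0 : ℂ) 1)
    (hp₂ : p₂ ∈ Metric.sphere (0 : ℂ) 1)
    (hne : p₀ ≠ p₁ ∧ p₀ ≠ p₂ ∧ p₁ ≠ p₂)
    (A₀ A₁ A₂ : Set ℂ)
    (hconn : IsConnected A₀ ∧ IsConnected A₁ ∧ IsConnected A₂)
    (hdisj : Disjoint A₀ A₁ ∧ Disjoint A₀ A₂ ∧ Disjoint A₁ A₂)
    (hunion : A₀ ∪ A₁ ∪ A₂ = Metric.sphere (0 : ℂ) 1 \ {p₀, p₁, p₂})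
    (hf₀ : ∀ z ∈ A₀, ∀ k : Fin d, ∃ x : ℝ, f z k = Complex.I * (x : ℂ))
    (hf₁ : ∀ z ∈ A₁, ∀ k : Fin d, ∃ x : ℝ,
      f z k = (1 + (2 * w : ℝ) * Complex.I) * (x : ℂ))
    (hf₂ : ∀ z ∈ A₂, ∀ k : Fin d, ∃ x : ℝ,
      f z k = (1 + (w : ℝ) * Complex.I) * (x : ℂ)) :
    ∀ z ∈ Metric.closedBall (0 : ℂ) 1, f z = 0 :=
  holomorphic_triangle_component_constant_general w d f hcont hdiff p₀ p₁ p₂ A₀ A₁ A₂ hconn hunion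
    hf₀ hf₁ hf₂
end

section
/- Let ι : [0,1] × ℝ → ℝ³ be a smooth map which is 1-periodic in the second variable (ι(t, s + 1) = ι(t, s) for all t, s) and satisfies ∂_s ι(t, s) ≠ 0 for all (t, s). Then there exist smooth maps u, v : [0,1] × ℝ → ℝ³, both 1-periodic in the second variable, such that for every (t, s): ‖u(t,s)‖ = ‖v(t,s)‖ = 1, ⟪u(t,s), v(t,s)⟫ = 0, ⟪u(t,s), ∂_s ι(t,s)⟫ = 0, and ⟪v(t,s), ∂_s ι(t,s)⟫ = 0; that is, (u(t,s), v(t,s)) is an orthonormal frame of the orthogonal complement of the tangent direction ∂_s ι(t,s) in ℝ³. -/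
noncomputable section
open Set Function

section rot
variable {F : Type*} [NormedAddCommGroup F] [InnerProductSpace ℝ F]

local notation "⟪" x ", " y "⟫" => @inner ℝ _ _ x y

/-- Rotation taking unit vector `a` to unit vector `b` (defined when `⟪a,b⟫ ≠ -1`). -/
noncomputable def rot3 (a b x : F) : F :=
  x - ((⟪a, x⟫ + ⟪b, x⟫) / (1 + ⟪a, b⟫)) • (a + b) + (2 * ⟪a, x⟫) • b

lemma rot3_inner {a b : F} (ha : ‖a‖ = 1) (hb : ‖b‖ = 1) (hab : 1 + ⟪a, b⟫ ≠ 0)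
    (x y : F) : ⟪rot3 a b x, rot3 a b y⟫ = ⟪x, y⟫ := by
  have haa : ⟪a, a⟫ = 1 := by
    rw [real_inner_self_eq_norm_mul_norm, ha]; ring
  have hbb : ⟪b, b⟫ = 1 := by
    rw [real_inner_self_eq_norm_mul_norm, hb]; ring
  simp only [rot3, inner_sub_left, inner_sub_right, inner_add_left, inner_add_right,
    real_inner_smul_left, real_inner_smul_right]
  simp only [real_inner_comm b a, real_inner_comm x a, real_inner_comm x b,
    real_inner_comm y a, real_inner_comm y b, haa, hbb]
  have hab' : 1 + ⟪b, a⟫ ≠ 0 := by rwa [real_inner_comm]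
  field_simp
  ring

lemma rot3_fst {a b : F} (ha : ‖a‖ = 1) (hab : 1 + ⟪a, b⟫ ≠ 0) :
    rot3 a b a = b := by
  have haa : ⟪a, a⟫ = 1 := by
    rw [real_inner_self_eq_norm_mul_norm, ha]; ring
  have hab' : 1 + ⟪b, a⟫ ≠ 0 := by rwa [real_inner_comm]
  simp only [rot3, haa]
  match_scalars <;> field_simp <;> rw [real_inner_comm] <;> ring

lemma rot3_norm {a b : F} (ha : ‖a‖ = 1) (hb : ‖b‖ = 1) (hab : 1 + ⟪a, b⟫ ≠ 0)
    (x : F) : ‖rot3 a b x‖ = ‖x‖ := by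
  have h := rot3_inner ha hb hab x x
  rw [real_inner_self_eq_norm_mul_norm, real_inner_self_eq_norm_mul_norm] at h
  nlinarith [norm_nonneg (rot3 a b x), norm_nonneg x]

lemma rot3_inner_snd {a b : F} (ha : ‖a‖ = 1) (hb : ‖b‖ = 1) (hab : 1 + ⟪a, b⟫ ≠ 0)
    (x : F) : ⟪rot3 a b x, b⟫ = ⟪x, a⟫ := by
  have h := rot3_inner ha hb hab x a
  rwa [rot3_fst ha hab] at h

/-- Smoothness of the rotation construction. -/
lemma ContDiffOn.rot3 {X : Type*} [NormedAddCommGroup X] [NormedSpace ℝ X]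
    {f g h : X → F} {s : Set X} {n : WithTop ℕ∞}
    (hf : ContDiffOn ℝ n f s) (hg : ContDiffOn ℝ n g s) (hh : ContDiffOn ℝ n h s)
    (hcond : ∀ p ∈ s, 1 + ⟪f p, g p⟫ ≠ 0) :
    ContDiffOn ℝ n (fun p => rot3 (f p) (g p) (h p)) s := by
  unfold _root_.rot3
  have hfh := ContDiffOn.inner ℝ hf hh
  have hgh := ContDiffOn.inner ℝ hg hh
  have hfg := ContDiffOn.inner ℝ hf hg
  exact (hh.sub ((((hfh.add hgh).div (contDiffOn_const.add hfg) hcond)).smul (hf.add hg))).add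
    ((contDiffOn_const.mul hfh).smul hg)
end rot

local notation "E3" => EuclideanSpace ℝ (Fin 3)
local notation "⟪" x ", " y "⟫" => @inner ℝ _ _ x y

lemma exists_orthonormal_pair (p : E3) (hp : ‖p‖ = 1) :
    ∃ e₁ e₂ : E3, ‖e₁‖ = 1 ∧ ‖e₂‖ = 1 ∧ ⟪e₁, e₂⟫ = 0 ∧ ⟪e₁, p⟫ = 0 ∧ ⟪e₂, p⟫ = 0 := by
  haveI : Fact (Module.finrank ℝ (EuclideanSpace ℝ (Fin 3)) = 2 + 1) :=
    ⟨by simp [finrank_euclideanSpace_fin]⟩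
  have hp0 : p ≠ 0 := by intro h; rw [h, norm_zero] at hp; norm_num at hp
  have hrank : Module.finrank ℝ ((Submodule.span ℝ {p})ᗮ : Submodule ℝ E3) = 2 :=
    Submodule.finrank_orthogonal_span_singleton hp0
  let b := (stdOrthonormalBasis ℝ ((Submodule.span ℝ {p})ᗮ : Submodule ℝ E3)).reindex
    (finCongr hrank)
  have hb := b.orthonormal
  have hmem : ∀ i : Fin 2, ((b i : E3)) ∈ (Submodule.span ℝ {p})ᗮ := fun i => (b i).2
  have hinner : ∀ i : Fin 2, ⟪(b i : E3), p⟫ = 0 := by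
    intro i
    have := (Submodule.mem_orthogonal _ _).1 (hmem i) p (Submodule.mem_span_singleton_self p)
    rw [real_inner_comm] at this; exact this
  refine ⟨b 0, b 1, ?_, ?_, ?_, hinner 0, hinner 1⟩
  · exact hb.1 0
  · exact hb.1 1
  · have h2 := hb.2 (i := 0) (j := 1) (by decide)
    simp only at h2
    rw [← Submodule.coe_inner]; exact h2

/-- A smooth curve cannot cover the unit sphere of `ℝ³` (baby Sard). -/
lemma exists_unit_avoid (c : ℝ → E3) (hc : ContDiffOn ℝ 1 c univ) :
    ∃ p : E3, ‖p‖ = 1 ∧ ∀ s, c s ≠ p := by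
  by_contra hcon
  push_neg at hcon
  have hsub : Metric.sphere (0 : E3) 1 ⊆ Set.range c := by
    intro p hp
    obtain ⟨s, hs⟩ := hcon p (by simpa using hp)
    exact ⟨s, hs⟩
  set L : E3 →L[ℝ] ℝ × ℝ :=
    (EuclideanSpace.proj (0 : Fin 3)).prod (EuclideanSpace.proj (1 : Fin 3)) with hL
  have hball : Metric.closedBall ((0, 0) : ℝ × ℝ) (1/2) ⊆ L '' (Set.range c) := by
    rintro ⟨y₁, y₂⟩ hy
    rw [Metric.mem_closedBall, Prod.dist_eq, Real.dist_eq, Real.dist_eq, sub_zero, sub_zero] at hy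
    have hy₁ : |y₁| ≤ 1/2 := le_trans (le_max_left _ _) hy
    have hy₂ : |y₂| ≤ 1/2 := le_trans (le_max_right _ _) hy
    have hyy : y₁^2 + y₂^2 ≤ 1 := by nlinarith [abs_nonneg y₁, abs_nonneg y₂, sq_abs y₁, sq_abs y₂]
    set x : E3 := (WithLp.equiv 2 (Fin 3 → ℝ)).symm ![y₁, y₂, Real.sqrt (1 - (y₁^2 + y₂^2))]
    have hx0 : x 0 = y₁ := rfl
    have hx1 : x 1 = y₂ := rfl
    have hx2 : x 2 = Real.sqrt (1 - (y₁^2 + y₂^2)) := rfl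
    have hxnorm : ‖x‖ = 1 := by
      rw [EuclideanSpace.norm_eq, Fin.sum_univ_three, hx0, hx1, hx2]
      rw [Real.norm_eq_abs, Real.norm_eq_abs, Real.norm_eq_abs, sq_abs, sq_abs, sq_abs,
        Real.sq_sqrt (by linarith)]
      rw [show y₁^2 + y₂^2 + (1 - (y₁^2+y₂^2)) = 1 by ring, Real.sqrt_one]
    have hxs : x ∈ Metric.sphere (0 : E3) 1 := by
      simpa using hxnorm
    refine ⟨x, hsub hxs, ?_⟩
    simp [hL, hx0, hx1]
  have hnb : L '' (Set.range c) ∈ nhds ((0,0) : ℝ × ℝ) :=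
    Filter.mem_of_superset (Metric.closedBall_mem_nhds _ (by norm_num)) hball
  have h2 : dimH (L '' (Set.range c)) = 2 := by
    rw [Real.dimH_of_mem_nhds hnb]
    norm_num
  have h1 : dimH (L '' (Set.range c)) ≤ 1 := by
    refine le_trans (L.lipschitz.dimH_image_le _) ?_
    rw [← Set.image_univ]
    exact le_trans (hc.dimH_image_le convex_univ subset_rfl) (le_of_eq Real.dimH_univ)
  rw [h2] at h1
  norm_num at h1

/-- Iterated rotation transport of a frame along the homotopy `τ ↦ T (τ t, s)`. -/
noncomputable def transportFrame (T : ℝ × ℝ → EuclideanSpace ℝ (Fin 3)) (N : ℕ)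
    (w : ℝ → EuclideanSpace ℝ (Fin 3)) : ℕ → ℝ × ℝ → EuclideanSpace ℝ (Fin 3)
  | 0 => fun p => w p.2
  | (k+1) => fun p =>
      rot3 (T ((k : ℝ) / (N : ℝ) * p.1, p.2)) (T (((k : ℝ) + 1) / (N : ℝ) * p.1, p.2))
        (transportFrame T N w k p)

example (T : ℝ × ℝ → E3) (N : ℕ) (w : ℝ → E3) (p : ℝ×ℝ) (k : ℕ) :
    transportFrame T N w (k+1) p =
      rot3 (T ((k : ℝ) / (N : ℝ) * p.1, p.2)) (T (((k : ℝ) + 1) / (N : ℝ) * p.1, p.2))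
        (transportFrame T N w k p) := rfl

set_option maxHeartbeats 1600000

/-- claim used in the proof of Proposition 4.1 of the paper.
Given a smooth family `ι : [0,1] × ℝ/ℤ → ℝ³` of immersed loops (formalized as
a map on `[0,1] × ℝ`, `1`-periodic in the second variable, with nonvanishing
`s`-derivative), the conormal (normal) plane bundle admits a global smooth
orthonormal frame: there are smooth `1`-periodic maps `u, v` such that
`(u(t,s), v(t,s))` is an orthonormal frame of the orthogonal complement of
`∂ₛι(t,s)` in ℝ³ for every `t ∈ [0,1]` and `s ∈ ℝ`. -/
theorem conormal_frame_of_loop_family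
    (ι : ℝ × ℝ → EuclideanSpace ℝ (Fin 3))
    (hsmooth : ContDiffOn ℝ (⊤ : ℕ∞) ι (Set.Icc (0 : ℝ) 1 ×ˢ Set.univ))
    (hper : ∀ t s : ℝ, ι (t, s + 1) = ι (t, s))
    (himm : ∀ t ∈ Set.Icc (0 : ℝ) 1, ∀ s : ℝ,
      deriv (fun s' => ι (t, s')) s ≠ 0) :
    ∃ u v : ℝ × ℝ → EuclideanSpace ℝ (Fin 3),
      ContDiffOn ℝ (⊤ : ℕ∞) u (Set.Icc (0 : ℝ) 1 ×ˢ Set.univ) ∧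
      ContDiffOn ℝ (⊤ : ℕ∞) v (Set.Icc (0 : ℝ) 1 ×ˢ Set.univ) ∧
      (∀ t s : ℝ, u (t, s + 1) = u (t, s)) ∧
      (∀ t s : ℝ, v (t, s + 1) = v (t, s)) ∧
      (∀ t ∈ Set.Icc (0 : ℝ) 1, ∀ s : ℝ,
        ‖u (t, s)‖ = 1 ∧ ‖v (t, s)‖ = 1 ∧
        (inner ℝ (u (t, s)) (v (t, s)) : ℝ) = 0 ∧
        (inner ℝ (u (t, s)) (deriv (fun s' => ι (t, s')) s) : ℝ) = 0 ∧
        (inner ℝ (v (t, s)) (deriv (fun s' => ι (t, s')) s) : ℝ) = 0) := by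
  classical
  set S : Set (ℝ × ℝ) := Set.Icc (0 : ℝ) 1 ×ˢ Set.univ with hSdef
  have hUD : UniqueDiffOn ℝ S := (uniqueDiffOn_Icc one_pos).prod uniqueDiffOn_univ
  set g : ℝ × ℝ → E3 := fun p => deriv (fun s' => ι (p.1, s')) p.2 with hgdef
  -- the partial derivative in the `s` direction, as a within-derivative
  have hslice : ∀ {t s : ℝ}, t ∈ Set.Icc (0 : ℝ) 1 →
      HasDerivAt (fun s' => ι (t, s')) (fderivWithin ℝ ι S (t, s) ((0 : ℝ), (1 : ℝ))) s := by
    intro t s ht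
    have hmem : (t, s) ∈ S := ⟨ht, Set.mem_univ _⟩
    have hd := ((hsmooth.differentiableOn (by simp)) (t, s) hmem).hasFDerivWithinAt
    have hj : HasDerivAt (fun s' : ℝ => (t, s')) ((0 : ℝ), (1 : ℝ)) s :=
      (hasDerivAt_const s t).prodMk (hasDerivAt_id s)
    have hcomp := HasFDerivWithinAt.comp_hasDerivWithinAt (s := Set.univ) s hd
      hj.hasDerivWithinAt (fun s' _ => ⟨ht, Set.mem_univ _⟩)
    rw [hasDerivWithinAt_univ] at hcomp
    exact hcomp
  have hgD : Set.EqOn g (fun p => fderivWithin ℝ ι S p ((0 : ℝ), (1 : ℝ))) S := by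
    rintro ⟨t, s⟩ hp
    exact (hslice hp.1).deriv
  have hg : ContDiffOn ℝ (⊤ : ℕ∞) g S := by
    have h1 : ContDiffOn ℝ (⊤ : ℕ∞) (fderivWithin ℝ ι S) S := hsmooth.fderivWithin hUD (by simp)
    have h2 : ContDiffOn ℝ (⊤ : ℕ∞) (fun p => fderivWithin ℝ ι S p ((0 : ℝ), (1 : ℝ))) S :=
      (ContinuousLinearMap.apply ℝ (EuclideanSpace ℝ (Fin 3))
        ((0 : ℝ), (1 : ℝ))).contDiff.comp_contDiffOn h1
    exact h2.congr hgD
  have hgper : ∀ t s : ℝ, g (t, s + 1) = g (t, s) := by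
    intro t s
    have hfun : (fun x : ℝ => ι (t, x + 1)) = fun x : ℝ => ι (t, x) :=
      funext fun x => hper t x
    have h := deriv_comp_add_const (fun s' => ι (t, s')) 1 s
    rw [hfun] at h
    exact h.symm
  have hgne : ∀ p ∈ S, g p ≠ 0 := fun p hp => himm p.1 hp.1 p.2
  set T : ℝ × ℝ → E3 := fun p => ‖g p‖⁻¹ • g p with hTdef
  have hT : ContDiffOn ℝ (⊤ : ℕ∞) T S :=
    ((ContDiffOn.norm ℝ hg hgne).inv (fun p hp => norm_ne_zero_iff.2 (hgne p hp))).smul hg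
  have hTunit : ∀ p ∈ S, ‖T p‖ = 1 := by
    intro p hp
    rw [hTdef]
    rw [norm_smul, norm_inv, norm_norm, inv_mul_cancel₀ (norm_ne_zero_iff.2 (hgne p hp))]
  have hTper : ∀ t s : ℝ, T (t, s + 1) = T (t, s) := fun t s => by
    simp only [hTdef, hgper]
  have hgT : ∀ p ∈ S, ‖g p‖ • T p = g p := by
    intro p hp
    rw [hTdef, smul_smul, mul_inv_cancel₀ (norm_ne_zero_iff.2 (hgne p hp)), one_smul]
  -- uniform continuity on a fundamental compact set
  have hKsub : (Set.Icc (0:ℝ) 1 ×ˢ Set.Icc (0:ℝ) 1) ⊆ S := fun x hx => ⟨hx.1, Set.mem_univ _⟩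
  have hKc : IsCompact (Set.Icc (0:ℝ) 1 ×ˢ Set.Icc (0:ℝ) 1) := isCompact_Icc.prod isCompact_Icc
  obtain ⟨δ, hδpos, hδ⟩ := (Metric.uniformContinuousOn_iff).1
    (hKc.uniformContinuousOn_of_continuous ((hT.continuousOn).mono hKsub)) 2 two_pos
  obtain ⟨n, hn⟩ := exists_nat_one_div_lt hδpos
  set N : ℕ := n + 1 with hNdef
  have hNpos : (0 : ℝ) < N := by positivity
  have hNδ : 1 / (N : ℝ) < δ := by rw [hNdef]; push_cast; exact hn
  have hclose : ∀ a b : ℝ, a ∈ Set.Icc (0 : ℝ) 1 → b ∈ Set.Icc (0 : ℝ) 1 → |a - b| ≤ 1 / N →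
      ∀ s : ℝ, 1 + (inner ℝ (T (a, s)) (T (b, s)) : ℝ) ≠ 0 := by
    intro a b ha hb hab s
    have hfr : ∀ r : ℝ, T (r, Int.fract s) = T (r, s) := by
      intro r
      have hPer : Function.Periodic (fun z => T (r, z)) 1 := fun z => hTper r z
      have h2 := hPer.sub_zsmul_eq ⌊s⌋ (x := s)
      rw [zsmul_eq_mul, mul_one] at h2
      rw [Int.fract]
      exact h2
    have hfrmem : Int.fract s ∈ Set.Icc (0 : ℝ) 1 :=
      ⟨Int.fract_nonneg s, (Int.fract_lt_one s).le⟩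
    have hdd : dist ((a, Int.fract s) : ℝ × ℝ) ((b, Int.fract s) : ℝ × ℝ) < δ := by
      rw [Prod.dist_eq]
      simp only [dist_self, Real.dist_eq]
      calc max |a - b| 0 = |a - b| := max_eq_left (abs_nonneg _)
        _ ≤ 1 / N := hab
        _ < δ := hNδ
    have hdist := hδ (a, Int.fract s) ⟨ha, hfrmem⟩ (b, Int.fract s) ⟨hb, hfrmem⟩ hdd
    rw [dist_eq_norm] at hdist
    have hua : ‖T (a, Int.fract s)‖ = 1 := hTunit _ ⟨ha, Set.mem_univ _⟩
    have hub : ‖T (b, Int.fract s)‖ = 1 := hTunit _ ⟨hb, Set.mem_univ _⟩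
    have hsq := norm_sub_sq_real (T (a, Int.fract s)) (T (b, Int.fract s))
    rw [hua, hub] at hsq
    have hpos : 0 < 1 + (inner ℝ (T (a, Int.fract s)) (T (b, Int.fract s)) : ℝ) := by
      nlinarith [hdist, norm_nonneg (T (a, Int.fract s) - T (b, Int.fract s))]
    rw [hfr a, hfr b] at hpos
    exact hpos.ne'
  -- membership helpers
  have h0mem : ∀ s : ℝ, ((0 : ℝ), s) ∈ S := fun s => ⟨⟨le_refl 0, zero_le_one⟩, Set.mem_univ _⟩
  have hmemA : ∀ r : ℝ, 0 ≤ r → r ≤ (N : ℝ) → ∀ q ∈ S, ((r / N * q.1, q.2) : ℝ × ℝ) ∈ S := by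
    rintro r hr0 hrN ⟨t, s⟩ ⟨ht, _⟩
    have h1 : 0 ≤ r / (N : ℝ) := div_nonneg hr0 hNpos.le
    have h2 : r / (N : ℝ) ≤ 1 := (div_le_one hNpos).2 hrN
    exact ⟨⟨mul_nonneg h1 ht.1, by nlinarith [ht.1, ht.2]⟩, Set.mem_univ _⟩
  have hAnorm : ∀ r : ℝ, 0 ≤ r → r ≤ (N : ℝ) → ∀ q ∈ S, ‖T (r / N * q.1, q.2)‖ = 1 :=
    fun r hr0 hrN q hq => hTunit _ (hmemA r hr0 hrN q hq)
  have hAsm : ∀ r : ℝ, 0 ≤ r → r ≤ (N : ℝ) →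
      ContDiffOn ℝ (⊤ : ℕ∞) (fun q : ℝ × ℝ => T (r / N * q.1, q.2)) S := by
    intro r hr0 hrN
    exact hT.comp (((contDiff_const.mul contDiff_fst).prodMk contDiff_snd).contDiffOn)
      (fun q hq => hmemA r hr0 hrN q hq)
  have hcond : ∀ k : ℕ, k < N → ∀ q ∈ S,
      1 + (inner ℝ (T ((k : ℝ) / N * q.1, q.2)) (T (((k : ℝ) + 1) / N * q.1, q.2)) : ℝ) ≠ 0 := by
    rintro k hk ⟨t, s⟩ ⟨ht, _⟩
    have hkN : (k : ℝ) + 1 ≤ N := by exact_mod_cast Nat.succ_le_of_lt hk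
    have hk0 : (0 : ℝ) ≤ k := Nat.cast_nonneg k
    have ha : (k : ℝ) / N * t ∈ Set.Icc (0 : ℝ) 1 := by
      have := hmemA (k : ℝ) hk0 (by linarith) (t, s) ⟨ht, Set.mem_univ _⟩
      exact this.1
    have hb : ((k : ℝ) + 1) / N * t ∈ Set.Icc (0 : ℝ) 1 := by
      have := hmemA ((k : ℝ) + 1) (by linarith) hkN (t, s) ⟨ht, Set.mem_univ _⟩
      exact this.1
    refine hclose _ _ ha hb ?_ s
    have hdiff : (k : ℝ) / N * t - ((k : ℝ) + 1) / N * t = -(t / N) := by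
      field_simp
      ring
    rw [hdiff, abs_neg, abs_of_nonneg (div_nonneg ht.1 hNpos.le)]
    gcongr
    exact ht.2
  -- base frame along the loop `T (0, ·)`
  have hcurve : ContDiffOn ℝ (⊤ : ℕ∞) (fun s : ℝ => T (0, s)) Set.univ := by
    have := hT.comp ((contDiff_const.prodMk contDiff_id).contDiffOn)
      (fun s (_ : s ∈ (Set.univ : Set ℝ)) => h0mem s)
    exact this
  obtain ⟨p, hpnorm, hpavoid⟩ := exists_unit_avoid (fun s => T (0, s)) (hcurve.of_le (by simp))
  obtain ⟨e₁, e₂, he₁, he₂, he₁₂, he₁p, he₂p⟩ := exists_orthonormal_pair p hpnorm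
  have hnegp : ‖-p‖ = 1 := by rwa [norm_neg]
  have hbcond : ∀ s : ℝ, 1 + (inner ℝ (-p) (T (0, s)) : ℝ) ≠ 0 := by
    intro s h
    have h1 : (inner ℝ p (T (0, s)) : ℝ) = 1 := by
      rw [inner_neg_left] at h; linarith
    exact hpavoid s ((inner_eq_one_iff_of_norm_eq_one hpnorm (hTunit _ (h0mem s))).1 h1).symm
  set u₀ : ℝ → E3 := fun s => rot3 (-p) (T (0, s)) e₁ with hu₀def
  set v₀ : ℝ → E3 := fun s => rot3 (-p) (T (0, s)) e₂ with hv₀def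
  have hTC : ContDiffOn ℝ (⊤ : ℕ∞) (fun q : ℝ × ℝ => T (0, q.2)) S :=
    hT.comp ((contDiff_const.prodMk contDiff_snd).contDiffOn) (fun q _ => h0mem q.2)
  have hu₀sm : ContDiffOn ℝ (⊤ : ℕ∞) (fun q : ℝ × ℝ => u₀ q.2) S :=
    ContDiffOn.rot3 contDiffOn_const hTC contDiffOn_const (fun q _ => hbcond q.2)
  have hv₀sm : ContDiffOn ℝ (⊤ : ℕ∞) (fun q : ℝ × ℝ => v₀ q.2) S :=
    ContDiffOn.rot3 contDiffOn_const hTC contDiffOn_const (fun q _ => hbcond q.2)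
  have hu₀per : ∀ s : ℝ, u₀ (s + 1) = u₀ s := fun s => by simp only [hu₀def, hTper]
  have hv₀per : ∀ s : ℝ, v₀ (s + 1) = v₀ s := fun s => by simp only [hv₀def, hTper]
  -- invariants of the transport
  have hWsm : ∀ w : ℝ → E3, ContDiffOn ℝ (⊤ : ℕ∞) (fun q : ℝ × ℝ => w q.2) S →
      ∀ k : ℕ, k ≤ N → ContDiffOn ℝ (⊤ : ℕ∞) (transportFrame T N w k) S := by
    intro w hw k
    induction k with
    | zero => intro _; exact hw
    | succ k ih =>
      intro hk
      have hk' : k ≤ N := Nat.le_of_succ_le hk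
      have hkR : (k : ℝ) ≤ N := by exact_mod_cast hk'
      have hkR1 : (k : ℝ) + 1 ≤ N := by exact_mod_cast hk
      exact ContDiffOn.rot3 (hAsm (k : ℝ) (Nat.cast_nonneg k) hkR)
        (hAsm ((k : ℝ) + 1) (by positivity) hkR1) (ih hk')
        (hcond k (Nat.lt_of_succ_le hk))
  have hWper : ∀ w : ℝ → E3, (∀ s, w (s + 1) = w s) →
      ∀ k : ℕ, ∀ t s : ℝ, transportFrame T N w k (t, s + 1) = transportFrame T N w k (t, s) := by
    intro w hw k
    induction k with
    | zero => intro t s; exact hw s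
    | succ k ih =>
      intro t s
      rw [show transportFrame T N w (k + 1) (t, s + 1) = rot3 (T ((k : ℝ) / N * t, s + 1))
            (T (((k : ℝ) + 1) / N * t, s + 1)) (transportFrame T N w k (t, s + 1)) from rfl,
          show transportFrame T N w (k + 1) (t, s) = rot3 (T ((k : ℝ) / N * t, s))
            (T (((k : ℝ) + 1) / N * t, s)) (transportFrame T N w k (t, s)) from rfl,
          hTper, hTper, ih]
  have hWinner : ∀ w w' : ℝ → E3, ∀ k : ℕ, k ≤ N → ∀ q ∈ S,
      (inner ℝ (transportFrame T N w k q) (transportFrame T N w' k q) : ℝ) =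
        inner ℝ (w q.2) (w' q.2) := by
    intro w w' k
    induction k with
    | zero => intro _ q _; rfl
    | succ k ih =>
      intro hk q hq
      have hk' : k ≤ N := Nat.le_of_succ_le hk
      have hkR : (k : ℝ) ≤ N := by exact_mod_cast hk'
      have hkR1 : (k : ℝ) + 1 ≤ N := by exact_mod_cast hk
      show (inner ℝ (rot3 _ _ _) (rot3 _ _ _) : ℝ) = _
      rw [rot3_inner (hAnorm (k : ℝ) (Nat.cast_nonneg k) hkR q hq)
        (hAnorm ((k : ℝ) + 1) (by positivity) hkR1 q hq)
        (hcond k (Nat.lt_of_succ_le hk) q hq)]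
      exact ih hk' q hq
  have hWtan : ∀ w : ℝ → E3, ∀ k : ℕ, k ≤ N → ∀ q ∈ S,
      (inner ℝ (transportFrame T N w k q) (T ((k : ℝ) / N * q.1, q.2)) : ℝ) =
        inner ℝ (w q.2) (T (0, q.2)) := by
    intro w k
    induction k with
    | zero =>
      intro _ q _
      simp only [Nat.cast_zero, zero_div, zero_mul]
      rfl
    | succ k ih =>
      intro hk q hq
      have hk' : k ≤ N := Nat.le_of_succ_le hk
      have hkR : (k : ℝ) ≤ N := by exact_mod_cast hk'
      have hkR1 : (k : ℝ) + 1 ≤ N := by exact_mod_cast hk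
      have hcast : ((k + 1 : ℕ) : ℝ) = (k : ℝ) + 1 := by push_cast; ring
      rw [show (transportFrame T N w (k + 1) q) = rot3 (T ((k : ℝ) / N * q.1, q.2))
        (T (((k : ℝ) + 1) / N * q.1, q.2)) (transportFrame T N w k q) from rfl, hcast]
      rw [rot3_inner_snd (hAnorm (k : ℝ) (Nat.cast_nonneg k) hkR q hq)
        (hAnorm ((k : ℝ) + 1) (by positivity) hkR1 q hq)
        (hcond k (Nat.lt_of_succ_le hk) q hq)]
      exact ih hk' q hq
  -- assemble
  refine ⟨transportFrame T N u₀ N, transportFrame T N v₀ N,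
    hWsm u₀ hu₀sm N le_rfl, hWsm v₀ hv₀sm N le_rfl,
    hWper u₀ hu₀per N, hWper v₀ hv₀per N, ?_⟩
  intro t ht s
  have hq : ((t, s) : ℝ × ℝ) ∈ S := ⟨ht, Set.mem_univ _⟩
  have hTq : ‖T (0, s)‖ = 1 := hTunit _ (h0mem s)
  have hu₀n : ‖u₀ s‖ = 1 := by rw [hu₀def]; rw [rot3_norm hnegp hTq (hbcond s)]; exact he₁
  have hv₀n : ‖v₀ s‖ = 1 := by rw [hv₀def]; rw [rot3_norm hnegp hTq (hbcond s)]; exact he₂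
  have huvi : (inner ℝ (u₀ s) (v₀ s) : ℝ) = 0 := by
    rw [hu₀def, hv₀def, rot3_inner hnegp hTq (hbcond s)]; exact he₁₂
  have hu₀t : (inner ℝ (u₀ s) (T (0, s)) : ℝ) = 0 := by
    rw [hu₀def, rot3_inner_snd hnegp hTq (hbcond s), inner_neg_right, he₁p, neg_zero]
  have hv₀t : (inner ℝ (v₀ s) (T (0, s)) : ℝ) = 0 := by
    rw [hv₀def, rot3_inner_snd hnegp hTq (hbcond s), inner_neg_right, he₂p, neg_zero]
  have hTN : T ((N : ℝ) / N * t, s) = T (t, s) := by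
    rw [div_self hNpos.ne', one_mul]
  have hun : ‖transportFrame T N u₀ N (t, s)‖ = 1 := by
    have h := hWinner u₀ u₀ N le_rfl (t, s) hq
    rw [real_inner_self_eq_norm_mul_norm, real_inner_self_eq_norm_mul_norm, hu₀n] at h
    nlinarith [norm_nonneg (transportFrame T N u₀ N (t, s))]
  have hvn : ‖transportFrame T N v₀ N (t, s)‖ = 1 := by
    have h := hWinner v₀ v₀ N le_rfl (t, s) hq
    rw [real_inner_self_eq_norm_mul_norm, real_inner_self_eq_norm_mul_norm, hv₀n] at h
    nlinarith [norm_nonneg (transportFrame T N v₀ N (t, s))]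
  have hderiv : deriv (fun s' => ι (t, s')) s = g (t, s) := rfl
  have hutan : (inner ℝ (transportFrame T N u₀ N (t, s)) (T (t, s)) : ℝ) = 0 := by
    have h := hWtan u₀ N le_rfl (t, s) hq
    rw [hTN] at h
    rw [h]; exact hu₀t
  have hvtan : (inner ℝ (transportFrame T N v₀ N (t, s)) (T (t, s)) : ℝ) = 0 := by
    have h := hWtan v₀ N le_rfl (t, s) hq
    rw [hTN] at h
    rw [h]; exact hv₀t
  refine ⟨hun, hvn, ?_, ?_, ?_⟩
  · rw [hWinner u₀ v₀ N le_rfl (t, s) hq]; exact huvi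
  · rw [hderiv, ← hgT (t, s) hq, real_inner_smul_right, hutan, mul_zero]
  · rw [hderiv, ← hgT (t, s) hq, real_inner_smul_right, hvtan, mul_zero]
end
end
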